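/- Let u₀, v₀: ℝ² → ℝ be the unique functions such that (u₀(x,y), v₀(x,y)) satisfies v² + y² = (x²+u²)², vu + yx = 0, vx − yu ≥ 0, with u₀ opposite in sign to y and v₀ the same sign as x. Then for all t > 0 and (x,y) ∈ ℝ²: u₀(tx, t²y) = t·u₀(x,y) and v₀(tx, t²y) = t²·v₀(x,y). -/

import Mathlib

/-!
For a solution, `r = x ^ 2 + u ^ 2` satisfies `v ^ 2 = x ^ 2 * r` and `y ^ 2 = u ^ 2 * r`, hence
`r ^ 2 = x ^ 2 * r + y ^ 2`; as `r ≥ x ^ 2` it is the larger root, so `u ^ 2` and `v ^ 2` are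
determined by `(x, y)`, and the sign conventions then determine `u` and `v`. The weighted scaling
`(x, y, u, v) ↦ (t x, t² y, t u, t² v)` maps solutions to solutions, so uniqueness gives homogeneity.
-/

def HarveyLawsonSystem (x y u v : ℝ) : Prop :=
  v ^ 2 + y ^ 2 = (x ^ 2 + u ^ 2) ^ 2 ∧ v * u + y * x = 0 ∧ y * u ≤ 0 ∧ 0 ≤ x * v

lemma eq_of_sq_eq_of_mul_nonneg_of_mul_nonneg {a b c : ℝ} (hsq : a ^ 2 = b ^ 2)
    (ha : 0 ≤ c * a) (hb : 0 ≤ c * b) (hc : c = 0 → a = 0) : a = b := by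
  rcases eq_or_ne c 0 with rfl | hc0
  · have hb0 : b = 0 := by nlinarith [hc rfl]
    rw [hc rfl, hb0]
  · have hab : 0 ≤ a * b := nonneg_of_mul_nonneg_right (by nlinarith [mul_nonneg ha hb])
      (by positivity : 0 < c ^ 2)
    rcases sq_eq_sq_iff_eq_or_eq_neg.mp hsq with h | h
    · exact h
    · nlinarith

lemma eq_of_sq_eq_mul_add_of_le {p q r s : ℝ} (hp : 0 ≤ p) (hr : p ≤ r) (hs : p ≤ s)
    (hrq : r ^ 2 = p * r + q) (hsq : s ^ 2 = p * s + q) : r = s := by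
  have hprod : (r - s) * (r + s - p) = 0 := by linear_combination hrq - hsq
  rcases mul_eq_zero.mp hprod with h | h <;> linarith

namespace HarveyLawsonSystem

variable {x y u v : ℝ}

lemma sq_v (h1 : v ^ 2 + y ^ 2 = (x ^ 2 + u ^ 2) ^ 2) (h2 : v * u + y * x = 0) :
    v ^ 2 = x ^ 2 * (x ^ 2 + u ^ 2) := by
  have key : (x ^ 2 + u ^ 2) * (v ^ 2 - x ^ 2 * (x ^ 2 + u ^ 2)) = 0 := by
    linear_combination (v * u - y * x) * h2 + x ^ 2 * h1
  rcases mul_eq_zero.mp key with hr | h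
  · rw [hr]; nlinarith
  · linarith

lemma sq_y (h1 : v ^ 2 + y ^ 2 = (x ^ 2 + u ^ 2) ^ 2) (h2 : v * u + y * x = 0) :
    y ^ 2 = u ^ 2 * (x ^ 2 + u ^ 2) := by
  have key : (x ^ 2 + u ^ 2) * (y ^ 2 - u ^ 2 * (x ^ 2 + u ^ 2)) = 0 := by
    linear_combination (y * x - v * u) * h2 + u ^ 2 * h1
  rcases mul_eq_zero.mp key with hr | h
  · rw [hr]; nlinarith
  · linarith

lemma unique {u' v' : ℝ} (h : HarveyLawsonSystem x y u v) (h' : HarveyLawsonSystem x y u' v') :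
    u = u' ∧ v = v' := by
  obtain ⟨h1, h2, hyu, hxv⟩ := h
  obtain ⟨h1', h2', hyu', hxv'⟩ := h'
  have hv := sq_v h1 h2
  have hv' := sq_v h1' h2'
  have hr : x ^ 2 + u ^ 2 = x ^ 2 + u' ^ 2 :=
    eq_of_sq_eq_mul_add_of_le (q := y ^ 2) (sq_nonneg x) (le_add_of_nonneg_right (sq_nonneg u))
      (le_add_of_nonneg_right (sq_nonneg u')) (by linarith) (by linarith)
  have hu_of_y : -y = 0 → u = 0 := fun hy0 ↦ by
    have hy := sq_y h1 h2
    rw [neg_eq_zero.mp hy0] at hy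
    have hu4 : u ^ 4 = 0 := by
      nlinarith [mul_nonneg (sq_nonneg u) (sq_nonneg x), pow_two_nonneg (u ^ 2)]
    exact pow_eq_zero_iff four_ne_zero |>.mp hu4
  have hv_of_x : x = 0 → v = 0 := fun hx0 ↦ by
    rw [hx0] at hv
    exact pow_eq_zero_iff two_ne_zero |>.mp (by simpa using hv)
  constructor
  · exact eq_of_sq_eq_of_mul_nonneg_of_mul_nonneg (by linarith) (by linarith) (by linarith)
      hu_of_y
  · exact eq_of_sq_eq_of_mul_nonneg_of_mul_nonneg (by rw [hv, hv', hr]) hxv hxv' hv_of_x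

lemma scale {t : ℝ} (ht : 0 ≤ t) (h : HarveyLawsonSystem x y u v) :
    HarveyLawsonSystem (t * x) (t ^ 2 * y) (t * u) (t ^ 2 * v) := by
  obtain ⟨h1, h2, hyu, hxv⟩ := h
  have ht3 : 0 ≤ t ^ 3 := by positivity
  refine ⟨by linear_combination t ^ 4 * h1, by linear_combination t ^ 3 * h2, ?_, ?_⟩
  · nlinarith [mul_nonpos_of_nonneg_of_nonpos ht3 hyu]
  · nlinarith [mul_nonneg ht3 hxv]

end HarveyLawsonSystem

theorem harvey_lawson_homogeneity (u₀ v₀ : ℝ → ℝ → ℝ)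
    (hsys : ∀ x y : ℝ,
      (v₀ x y) ^ 2 + y ^ 2 = (x ^ 2 + (u₀ x y) ^ 2) ^ 2 ∧
      v₀ x y * u₀ x y + y * x = 0 ∧
      v₀ x y * x - y * u₀ x y ≥ 0)
    (hsign : ∀ x y : ℝ, y * u₀ x y ≤ 0 ∧ x * v₀ x y ≥ 0) :
    ∀ t : ℝ, 0 < t → ∀ x y : ℝ,
      u₀ (t * x) (t ^ 2 * y) = t * u₀ x y ∧
      v₀ (t * x) (t ^ 2 * y) = t ^ 2 * v₀ x y := by
  have hsol : ∀ x y, HarveyLawsonSystem x y (u₀ x y) (v₀ x y) := fun x y ↦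
    ⟨(hsys x y).1, (hsys x y).2.1, (hsign x y).1, (hsign x y).2⟩
  intro t ht x y
  exact (hsol (t * x) (t ^ 2 * y)).unique ((hsol x y).scale ht.le)
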